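/- arXiv:0907.0152 — 3 statements merged into one kernel-verified Lean document; each statement's English description precedes it below -/
import Mathlib

section
/- Every 6-cycle of $K_6$ is a subgraph of exactly one of the 10 complete bipartite subgraphs $K_{3,3}$ of $K_6$, and every 5-cycle of $K_6$ is a subgraph of exactly one of the 6 complete subgraphs $K_5$ of $K_6$. -/
/-!
A subgraph isomorphic to `K_{α,β}` is cut out by a two-colouring of its vertices: two of its
vertices are adjacent exactly when their colours differ. If it contains a cycle through every
vertex, the colouring alternates along the cycle, so the adjacency between the `i`-th and the
`j`-th vertex of the cycle is forced to be the parity of `i + j`; this gives uniqueness for the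
6-cycles. A subgraph isomorphic to `K_k` is complete on its `k` vertices, which must be the `k`
vertices of a `k`-cycle it contains; this gives uniqueness for the 5-cycles. For existence,
transport `K_{3,3}` (resp. `K_5`) into `K_6` along an embedding that lists its vertices in
cycle order, alternating between the two sides of `K_{3,3}`.
-/

open SimpleGraph

/-- `E` is the edge set of a `k`-cycle in the complete graph on `Fin n`. -/
def IsCycleEdgeSet (n k : ℕ) [NeZero k] (E : Finset (Sym2 (Fin n))) : Prop :=
  3 ≤ k ∧ ∃ f : Fin k ↪ Fin n,
    E = Finset.image (fun i => s(f i, f (i + 1))) Finset.univ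

open Function

theorem Fin.apply_eq_xor_odd_of_forall_add_one_ne {n : ℕ} [NeZero n] {c : Fin n → Bool}
    (h : ∀ i, c (i + 1) ≠ c i) (i : Fin n) : c i = (c 0 ^^ decide (Odd (i : ℕ))) := by
  obtain ⟨n, rfl⟩ := Nat.exists_eq_succ_of_ne_zero (NeZero.ne n)
  induction i using Fin.induction with
  | zero => simp
  | succ i ih =>
    have hstep := h i.castSucc
    rw [Fin.coeSucc_eq_succ] at hstep
    rw [Bool.eq_not.mpr hstep, ih]
    simp only [Fin.val_succ, Fin.val_castSucc, Nat.odd_add_one, decide_not, Bool.xor_not]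

/-- Sends `2 * k` to `inl k` and `2 * k + 1` to `inr k`. -/
def finMulTwoEquivSum (m : ℕ) : Fin (m * 2) ≃ Fin m ⊕ Fin m :=
  finProdFinEquiv.symm.trans <| (Equiv.prodComm _ _).trans <|
    (finTwoEquiv.prodCongr (.refl _)).trans (Equiv.boolProdEquivSum _)

theorem isLeft_finMulTwoEquivSum {m : ℕ} (i : Fin (m * 2)) :
    (finMulTwoEquivSum m i).isLeft = decide (Even (i : ℕ)) := by
  rcases Nat.mod_two_eq_zero_or_one i with h | h <;>
    simp [finMulTwoEquivSum, finTwoEquiv, Fin.modNat, Nat.even_iff, h]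

namespace SimpleGraph

variable {V W α β α' β' : Type*} {G : SimpleGraph V} {H H' : G.Subgraph}

theorem completeBipartiteGraph_adj_iff_isLeft_ne {v w : α ⊕ β} :
    (completeBipartiteGraph α β).Adj v w ↔ v.isLeft ≠ w.isLeft := by
  cases v <;> cases w <;> simp

theorem completeBipartiteGraph_adj_finMulTwoEquivSum_add_one {m : ℕ} [NeZero m]
    (i : Fin (m * 2)) :
    (completeBipartiteGraph (Fin m) (Fin m)).Adj (finMulTwoEquivSum m i)
      (finMulTwoEquivSum m (i + 1)) := by
  have hone : 1 % (m * 2) = 1 := Nat.mod_eq_of_lt (by have := NeZero.pos m; omega)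
  rw [completeBipartiteGraph_adj_iff_isLeft_ne, isLeft_finMulTwoEquivSum,
    isLeft_finMulTwoEquivSum, Fin.val_add, Fin.val_one', hone]
  simp only [Nat.even_iff, Nat.mod_mod_of_dvd _ (dvd_mul_left 2 m), ne_eq, decide_eq_decide]
  omega

namespace Subgraph

theorem adj_iff_of_iso_top (e : H.coe ≃g (⊤ : SimpleGraph W)) {a b : V} :
    H.Adj a b ↔ a ∈ H.verts ∧ b ∈ H.verts ∧ a ≠ b := by
  refine ⟨fun h => ⟨H.edge_vert h, H.edge_vert h.symm, h.ne⟩, fun ⟨ha, hb, hab⟩ => ?_⟩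
  have hab' : (⟨a, ha⟩ : H.verts) ≠ ⟨b, hb⟩ := by simpa using hab
  exact e.map_adj_iff.mp <| (SimpleGraph.top_adj _ _).mpr <| e.injective.ne hab'

theorem verts_eq_range_of_iso [Finite W] {A : SimpleGraph W} (e : H.coe ≃g A) (g : W ↪ V)
    (hg : ∀ w, g w ∈ H.verts) : H.verts = Set.range g := by
  have hcard : H.verts.ncard = (Set.range g).ncard := by
    rw [Set.ncard_range_of_injective g.injective, ← Nat.card_coe_set_eq,
      Nat.card_congr e.toEquiv]
  have : Finite H.verts := .of_equiv _ e.toEquiv.symm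
  exact (Set.eq_of_subset_of_ncard_le (Set.range_subset_iff.mpr hg) hcard.le).symm

theorem eq_of_iso_top_of_forall_mem [Finite W] (g : W ↪ V) (e : H.coe ≃g (⊤ : SimpleGraph W))
    (e' : H'.coe ≃g (⊤ : SimpleGraph W)) (hg : ∀ w, g w ∈ H.verts)
    (hg' : ∀ w, g w ∈ H'.verts) : H = H' := by
  have hverts : H.verts = H'.verts :=
    (verts_eq_range_of_iso e g hg).trans (verts_eq_range_of_iso e' g hg').symm
  ext a b
  · rw [hverts]
  · rw [adj_iff_of_iso_top e, adj_iff_of_iso_top e', hverts]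

theorem exists_adj_iff_of_iso_completeBipartiteGraph
    (e : H.coe ≃g completeBipartiteGraph α β) :
    ∃ c : V → Bool, ∀ {a b}, H.Adj a b ↔ a ∈ H.verts ∧ b ∈ H.verts ∧ c a ≠ c b := by
  classical
  refine ⟨fun v => if hv : v ∈ H.verts then (e ⟨v, hv⟩).isLeft else false, fun {a b} => ?_⟩
  refine ⟨fun h => ⟨H.edge_vert h, H.edge_vert h.symm, ?_⟩, fun ⟨ha, hb, hab⟩ => ?_⟩
  · have ha := H.edge_vert h
    have hb := H.edge_vert h.symm
    have hadj := e.map_adj_iff.mpr (show H.coe.Adj ⟨a, ha⟩ ⟨b, hb⟩ from h)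
    rw [completeBipartiteGraph_adj_iff_isLeft_ne] at hadj
    simpa [ha, hb] using hadj
  · exact e.map_adj_iff.mp <| completeBipartiteGraph_adj_iff_isLeft_ne.mpr <| by
      simpa [ha, hb] using hab

theorem adj_iff_odd_add_of_iso_completeBipartiteGraph (e : H.coe ≃g completeBipartiteGraph α β)
    {n : ℕ} [NeZero n] {f : Fin n → V} (hf : ∀ i, H.Adj (f i) (f (i + 1))) (i j : Fin n) :
    H.Adj (f i) (f j) ↔ Odd ((i : ℕ) + j) := by
  obtain ⟨c, hc⟩ := exists_adj_iff_of_iso_completeBipartiteGraph e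
  have hmem (i) : f i ∈ H.verts := H.edge_vert (hf i)
  have hparity : ∀ i, c (f i) = (c (f 0) ^^ decide (Odd (i : ℕ))) :=
    Fin.apply_eq_xor_odd_of_forall_add_one_ne (c := c ∘ f) fun i => (hc.mp (hf i)).2.2.symm
  rw [hc, hparity i, hparity j]
  simp only [hmem, true_and, ne_eq, Bool.bne_right_inj, decide_eq_decide, Nat.odd_add,
    ← Nat.not_odd_iff_even]
  tauto

theorem eq_of_iso_completeBipartiteGraph_of_forall_adj {n : ℕ} [NeZero n] {f : Fin n → V}
    (hf : Surjective f) (e : H.coe ≃g completeBipartiteGraph α β)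
    (e' : H'.coe ≃g completeBipartiteGraph α' β') (hH : ∀ i, H.Adj (f i) (f (i + 1)))
    (hH' : ∀ i, H'.Adj (f i) (f (i + 1))) : H = H' := by
  have hverts {K : G.Subgraph} (hK : ∀ i, K.Adj (f i) (f (i + 1))) : K.verts = Set.univ :=
    Set.eq_univ_of_forall fun v => (hf v).elim fun i hi => hi ▸ K.edge_vert (hK i)
  ext a b
  · rw [hverts hH, hverts hH']
  · obtain ⟨i, rfl⟩ := hf a
    obtain ⟨j, rfl⟩ := hf b
    rw [adj_iff_odd_add_of_iso_completeBipartiteGraph e hH,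
      adj_iff_odd_add_of_iso_completeBipartiteGraph e' hH']

end Subgraph

theorem exists_subgraph_top_iso (A : SimpleGraph W) (g : W ↪ V) :
    ∃ H : (⊤ : SimpleGraph V).Subgraph, Nonempty (H.coe ≃g A) ∧
      ∀ u v, H.Adj (g u) (g v) ↔ A.Adj u v := by
  let φ : Copy A ⊤ := (Embedding.completeGraph g).toCopy.comp (Copy.ofLE A ⊤ le_top)
  refine ⟨φ.toSubgraph, ⟨φ.isoToSubgraph.symm⟩, fun u v => ?_⟩
  simp [φ, Copy.toSubgraph, Relation.map_apply, g.injective.eq_iff]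

theorem existsUnique_subgraph_iso_top_forall_adj {n : ℕ} (g : Fin (n + 2) ↪ V) :
    ∃! H : (⊤ : SimpleGraph V).Subgraph, Nonempty (H.coe ≃g completeGraph (Fin (n + 2))) ∧
      ∀ i, H.Adj (g i) (g (i + 1)) := by
  obtain ⟨H, ⟨e⟩, hH⟩ := exists_subgraph_top_iso ⊤ g
  have hcycle (i : Fin (n + 2)) : H.Adj (g i) (g (i + 1)) := (hH _ _).mpr (by simp)
  refine ⟨H, ⟨⟨e⟩, hcycle⟩, fun H' ⟨⟨e'⟩, hH'⟩ => ?_⟩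
  exact Subgraph.eq_of_iso_top_of_forall_mem g e' e (fun i => H'.edge_vert (hH' i))
    fun i => H.edge_vert (hcycle i)

theorem existsUnique_subgraph_iso_completeBipartiteGraph_forall_adj {m : ℕ} [NeZero m]
    (f : Fin (m * 2) ↪ V) (hf : Surjective f) :
    ∃! H : (⊤ : SimpleGraph V).Subgraph,
      Nonempty (H.coe ≃g completeBipartiteGraph (Fin m) (Fin m)) ∧
      ∀ i, H.Adj (f i) (f (i + 1)) := by
  obtain ⟨H, ⟨e⟩, hH⟩ :=
    exists_subgraph_top_iso _ ((finMulTwoEquivSum m).symm.toEmbedding.trans f)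
  have hcycle (i : Fin (m * 2)) : H.Adj (f i) (f (i + 1)) := by
    simpa using (hH _ _).mpr (completeBipartiteGraph_adj_finMulTwoEquivSum_add_one i)
  refine ⟨H, ⟨⟨e⟩, hcycle⟩, fun H' ⟨⟨e'⟩, hH'⟩ => ?_⟩
  exact Subgraph.eq_of_iso_completeBipartiteGraph_of_forall_adj hf e' e hH' hcycle

end SimpleGraph

/-- Every 6-cycle of `K₆` is a subgraph of exactly one of the `K₃,₃` subgraphs of `K₆`,
and every 5-cycle of `K₆` is a subgraph of exactly one of the `K₅` subgraphs. -/
theorem K6_cycles_in_unique_subgraph :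
    (∀ E : Finset (Sym2 (Fin 6)), IsCycleEdgeSet 6 6 E →
      Nat.card {H : SimpleGraph.Subgraph (completeGraph (Fin 6)) //
        Nonempty (H.coe ≃g completeBipartiteGraph (Fin 3) (Fin 3)) ∧
        ∀ e ∈ E, e ∈ H.edgeSet} = 1) ∧
    (∀ E : Finset (Sym2 (Fin 6)), IsCycleEdgeSet 6 5 E →
      Nat.card {H : SimpleGraph.Subgraph (completeGraph (Fin 6)) //
        Nonempty (H.coe ≃g completeGraph (Fin 5)) ∧
        ∀ e ∈ E, e ∈ H.edgeSet} = 1) := by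
  have card_eq_one {p : (completeGraph (Fin 6)).Subgraph → Prop} (h : ∃! H, p H) :
      Nat.card {H // p H} = 1 := by
    obtain ⟨_⟩ := (unique_subtype_iff_existsUnique p).mpr h
    exact Nat.card_unique
  refine ⟨fun E ⟨_, f, hE⟩ => card_eq_one ?_, fun E ⟨_, g, hE⟩ => card_eq_one ?_⟩ <;>
    simp only [hE, Finset.mem_image, Finset.mem_univ, true_and, forall_exists_index,
      forall_apply_eq_imp_iff, Subgraph.mem_edgeSet]
  · exact existsUnique_subgraph_iso_completeBipartiteGraph_forall_adj (m := 3) f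
      (Finite.surjective_of_injective f.injective)
  · exact existsUnique_subgraph_iso_top_forall_adj g
end

section
/- Every 4-cycle of $K_6$ is a subgraph of exactly two of the 10 complete bipartite subgraphs $K_{3,3}$ of $K_6$, and also a subgraph of exactly two of the 6 complete subgraphs $K_5$ of $K_6$. -/
open SimpleGraph

/-!
A copy of `K₅` in `K₆` is the complete graph on the complement of a single vertex, so it
contains a 4-cycle exactly when the deleted vertex is one of the two vertices off the cycle.
A copy of `K₃,₃` in `K₆` is the cut between a triple `s` and its complement. It contains the
4-cycle `a b c d` exactly when `a, c` and `b, d` lie on opposite sides, so the side of `a` is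
`{a, c, x}` with `x` one of the two vertices off the cycle.
-/

theorem Set.exists_eq_insert_pair_of_ncard_eq_three {V : Type*} {s : Set V} {a b : V}
    (hab : a ≠ b) (ha : a ∈ s) (hb : b ∈ s) (hs : s.ncard = 3) :
    ∃ x ∉ ({a, b} : Set V), s = insert x {a, b} := by
  have hfin : s.Finite := Set.finite_of_ncard_pos (by omega)
  obtain ⟨x, hxs, hx⟩ := Set.exists_mem_notMem_of_ncard_lt_ncard (s := {a, b}) (t := s)
    (by rw [Set.ncard_pair hab, hs]; omega)
  refine ⟨x, hx, (Set.eq_of_subset_of_ncard_le ?_ ?_ hfin).symm⟩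
  · exact Set.insert_subset hxs (Set.insert_subset ha (Set.singleton_subset_iff.mpr hb))
  · rw [Set.ncard_insert_of_notMem hx, Set.ncard_pair hab, hs]

theorem Function.Embedding.natCard_compl_range {α β : Type*} [Finite β] (f : α ↪ β) :
    Nat.card ↥(Set.range f)ᶜ = Nat.card β - Nat.card α := by
  rw [Nat.card_coe_set_eq, Set.ncard_compl, Set.ncard_range_of_injective f.injective]

theorem Function.Embedding.apply_ne_apply_add_one {V : Type*} {k : ℕ} [NeZero k] (hk : 2 ≤ k)
    (f : Fin k ↪ V) (i : Fin k) : f i ≠ f (i + 1) := by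
  rw [f.injective.ne_iff, Ne, left_eq_add, Fin.ext_iff, Fin.val_one', Fin.val_zero,
    Nat.one_mod_eq_zero_iff]
  omega

namespace SimpleGraph

variable {V W α β : Type*}

theorem Subgraph.forall_mem_image_mem_edgeSet_iff [DecidableEq V] {G : SimpleGraph V}
    (H : G.Subgraph) {ι : Type*} [Fintype ι] (u v : ι → V) :
    (∀ e ∈ Finset.univ.image (fun i => s(u i, v i)), e ∈ H.edgeSet) ↔
      ∀ i, H.Adj (u i) (v i) := by
  simp only [Finset.forall_mem_image, Finset.mem_univ, forall_const, Subgraph.mem_edgeSet]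

theorem Subgraph.isInduced_of_iso_completeGraph {H : (completeGraph V).Subgraph}
    (φ : H.coe ≃g completeGraph W) : H.IsInduced := by
  intro v hv w hw hvw
  have hne : (⟨v, hv⟩ : H.verts) ≠ ⟨w, hw⟩ := fun h => hvw (congrArg Subtype.val h)
  exact φ.map_adj_iff.mp (φ.injective.ne hne)

theorem Subgraph.nonempty_iso_induce_top {s : Set V} (e : s ≃ W) :
    Nonempty (((⊤ : (completeGraph V).Subgraph).induce s).coe ≃g completeGraph W) :=
  ⟨⟨e, fun {u v} => ⟨fun h => ⟨u.2, v.2, fun huv => h (congrArg e (Subtype.ext huv))⟩,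
    fun h => e.injective.ne fun huv => h.2.2 (congrArg Subtype.val huv)⟩⟩⟩

theorem Subgraph.exists_eq_induce_top_compl_singleton [Finite V] {H : (completeGraph V).Subgraph}
    (hV : Nat.card V = Nat.card W + 1) (φ : H.coe ≃g completeGraph W) :
    ∃ x, H = (⊤ : (completeGraph V).Subgraph).induce {x}ᶜ := by
  have hc : H.vertsᶜ.ncard = 1 := by
    rw [Set.ncard_compl, ← Nat.card_coe_set_eq, Nat.card_congr φ.toEquiv, hV,
      Nat.add_sub_cancel_left]
  obtain ⟨x, hx⟩ := Set.ncard_eq_one.mp hc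
  refine ⟨x, ?_⟩
  rw [← hx, compl_compl]
  exact (isInduced_of_iso_completeGraph φ).induce_top_verts.symm

def completeBipartiteSubgraph (s : Set V) : (completeGraph V).Subgraph where
  verts := Set.univ
  Adj x y := Xor (x ∈ s) (y ∈ s)
  adj_sub := by
    rintro x y h rfl
    simp at h
  edge_vert _ := Set.mem_univ _
  symm := ⟨fun x y h => xor_comm (x ∈ s) (y ∈ s) ▸ h⟩

@[simp]
theorem completeBipartiteSubgraph_adj {s : Set V} {x y : V} :
    (completeBipartiteSubgraph s).Adj x y ↔ Xor (x ∈ s) (y ∈ s) := Iff.rfl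

theorem completeBipartiteSubgraph_compl (s : Set V) :
    completeBipartiteSubgraph sᶜ = completeBipartiteSubgraph s := by
  refine Subgraph.ext rfl ?_
  ext x y
  simp only [completeBipartiteSubgraph_adj, Set.mem_compl_iff, xor_not_not]

theorem completeBipartiteSubgraph_inj_of_mem {s t : Set V} {a : V} (hs : a ∈ s) (ht : a ∈ t) :
    completeBipartiteSubgraph s = completeBipartiteSubgraph t ↔ s = t := by
  refine ⟨fun h => Set.ext fun y => ?_, congrArg _⟩
  have hadj : (completeBipartiteSubgraph s).Adj a y ↔ (completeBipartiteSubgraph t).Adj a y := by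
    rw [h]
  simpa [hs, ht, not_iff_not] using hadj

theorem completeBipartiteSubgraph_insert_injective {P : Set V} {a x y : V} (ha : a ∈ P)
    (hx : x ∉ P)
    (h : completeBipartiteSubgraph (insert x P) = completeBipartiteSubgraph (insert y P)) :
    x = y := by
  have hxy := (completeBipartiteSubgraph_inj_of_mem (Set.mem_insert_of_mem x ha)
    (Set.mem_insert_of_mem y ha)).mp h
  exact (Set.mem_insert_iff.mp (hxy ▸ Set.mem_insert x P)).resolve_right hx

theorem nonempty_iso_completeBipartiteSubgraph {s : Set V} (eα : s ≃ α) (eβ : ↥sᶜ ≃ β) :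
    Nonempty ((completeBipartiteSubgraph s).coe ≃g completeBipartiteGraph α β) := by
  classical
  let e : completeBipartiteGraph s ↥sᶜ ≃g (completeBipartiteSubgraph s).coe :=
    ⟨(Equiv.Set.sumCompl s).trans (Equiv.Set.univ V).symm, fun {z w} => by
      change Xor (Equiv.Set.sumCompl s z ∈ s) (Equiv.Set.sumCompl s w ∈ s) ↔ _
      rcases z with ⟨a, ha : a ∈ s⟩ | ⟨a, ha : a ∉ s⟩ <;>
        rcases w with ⟨b, hb : b ∈ s⟩ | ⟨b, hb : b ∉ s⟩ <;> simp [ha, hb]⟩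
  exact ⟨e.symm.trans (completeBipartiteGraphCongr eα eβ)⟩

theorem completeBipartiteGraph_adj_iff_xor {z w : α ⊕ β} :
    (completeBipartiteGraph α β).Adj z w ↔ Xor (z.isLeft = true) (w.isLeft = true) := by
  cases z <;> cases w <;> simp

theorem exists_eq_completeBipartiteSubgraph [Finite V] {H : (completeGraph V).Subgraph}
    (hV : Nat.card V = Nat.card α + Nat.card β) (φ : H.coe ≃g completeBipartiteGraph α β) :
    ∃ s : Set V, s.ncard = Nat.card α ∧ H = completeBipartiteSubgraph s := by
  have : Finite (α ⊕ β) := φ.toEquiv.finite_iff.mp inferInstance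
  have : Finite α := Finite.of_injective (Sum.inl : α → α ⊕ β) Sum.inl_injective
  have : Finite β := Finite.of_injective (Sum.inr : β → α ⊕ β) Sum.inr_injective
  have hverts : H.verts = Set.univ := by
    rw [Set.eq_univ_iff_ncard, ← Nat.card_coe_set_eq, Nat.card_congr φ.toEquiv, Nat.card_sum, hV]
  let e : V ≃ α ⊕ β :=
    (Equiv.Set.univ V).symm.trans ((Equiv.setCongr hverts).symm.trans φ.toEquiv)
  refine ⟨{v | (e v).isLeft}, ?_, Subgraph.ext hverts ?_⟩
  · rw [← Nat.card_coe_set_eq, ← Nat.card_congr (Equiv.sumIsLeft (α := α) (β := β))]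
    exact Nat.card_congr (e.subtypeEquiv fun _ => Iff.rfl)
  · ext x y
    have hx : x ∈ H.verts := hverts ▸ Set.mem_univ x
    have hy : y ∈ H.verts := hverts ▸ Set.mem_univ y
    rw [← Subgraph.coe_adj H ⟨x, hx⟩ ⟨y, hy⟩, ← φ.map_adj_iff]
    exact completeBipartiteGraph_adj_iff_xor

theorem completeBipartiteSubgraph_adj_cycle_four_iff {s : Set V} (u : Fin 4 → V)
    (h0 : u 0 ∈ s) :
    (∀ i, (completeBipartiteSubgraph s).Adj (u i) (u (i + 1))) ↔
      u 1 ∉ s ∧ u 2 ∈ s ∧ u 3 ∉ s := by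
  refine ⟨fun h => ?_, fun h i => ?_⟩
  · have h01 := h 0
    have h12 := h 1
    have h23 := h 2
    simp_all [xor_iff_iff_not]
  · fin_cases i <;> simp_all [xor_iff_iff_not]

end SimpleGraph

theorem IsCycleEdgeSet.natCard_completeSubgraphs {n k : ℕ} [NeZero k]
    {E : Finset (Sym2 (Fin (n + 1)))} (hE : IsCycleEdgeSet (n + 1) k E) :
    Nat.card {H : (completeGraph (Fin (n + 1))).Subgraph //
      Nonempty (H.coe ≃g completeGraph (Fin n)) ∧ ∀ e ∈ E, e ∈ H.edgeSet} =
      n + 1 - k := by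
  obtain ⟨hk, f, rfl⟩ := hE
  simp_rw [Subgraph.forall_mem_image_mem_edgeSet_iff]
  let K : Set (Fin (n + 1)) → (completeGraph (Fin (n + 1))).Subgraph := (⊤ : Subgraph _).induce
  have hK : ∀ x : ↥(Set.range f)ᶜ, Nonempty ((K {x.1}ᶜ).coe ≃g completeGraph (Fin n)) ∧
      ∀ i, (K {x.1}ᶜ).Adj (f i) (f (i + 1)) := by
    rintro ⟨x, hx⟩
    refine ⟨?_, fun i => ⟨fun h => hx ⟨i, h⟩, fun h => hx ⟨i + 1, h⟩,
      f.apply_ne_apply_add_one (by omega) i⟩⟩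
    have hcard : Nat.card ↥({x}ᶜ : Set (Fin (n + 1))) = Nat.card (Fin n) := by
      rw [Nat.card_coe_set_eq, Set.ncard_compl, Set.ncard_singleton]; simp
    obtain ⟨e⟩ := Finite.card_eq.mp hcard
    exact Subgraph.nonempty_iso_induce_top e
  let g : ↥(Set.range f)ᶜ → {H : (completeGraph (Fin (n + 1))).Subgraph //
      Nonempty (H.coe ≃g completeGraph (Fin n)) ∧ ∀ i, H.Adj (f i) (f (i + 1))} :=
    fun x => ⟨K {x.1}ᶜ, hK x⟩
  have hg : Function.Bijective g := by
    refine ⟨fun x y hxy => ?_, fun ⟨H, ⟨φ⟩, hH⟩ => ?_⟩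
    · have : ({x.1}ᶜ : Set _) = {y.1}ᶜ := congrArg (fun H => H.1.verts) hxy
      exact Subtype.ext (by simpa using this)
    · obtain ⟨x, rfl⟩ := Subgraph.exists_eq_induce_top_compl_singleton (by simp) φ
      refine ⟨⟨x, ?_⟩, rfl⟩
      rintro ⟨i, rfl⟩
      simpa using (hH i).1
  rw [← Nat.card_eq_of_bijective g hg, f.natCard_compl_range, Nat.card_fin, Nat.card_fin]

namespace SimpleGraph

variable (f : Fin 4 ↪ Fin 6)

theorem completeBipartiteSubgraph_insert_contains_cycle_four {x : Fin 6} (hx : x ∉ Set.range f) :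
    Nonempty ((completeBipartiteSubgraph (insert x {f 0, f 2})).coe ≃g
        completeBipartiteGraph (Fin 3) (Fin 3)) ∧
      ∀ i, (completeBipartiteSubgraph (insert x {f 0, f 2})).Adj (f i) (f (i + 1)) := by
  have hP : x ∉ ({f 0, f 2} : Set (Fin 6)) := fun h =>
    hx (Set.pair_subset (Set.mem_range_self 0) (Set.mem_range_self 2) h)
  have hcard : Nat.card ↥(insert x {f 0, f 2} : Set (Fin 6)) = Nat.card (Fin 3) := by
    rw [Nat.card_coe_set_eq, Set.ncard_insert_of_notMem hP,
      Set.ncard_pair (f.injective.ne (by decide))]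
    simp
  have hcard' : Nat.card ↥(insert x {f 0, f 2} : Set (Fin 6))ᶜ = Nat.card (Fin 3) := by
    rw [Nat.card_coe_set_eq, Set.ncard_compl, ← Nat.card_coe_set_eq, hcard]; simp
  obtain ⟨eα⟩ := Finite.card_eq.mp hcard
  obtain ⟨eβ⟩ := Finite.card_eq.mp hcard'
  refine ⟨nonempty_iso_completeBipartiteSubgraph eα eβ,
    (completeBipartiteSubgraph_adj_cycle_four_iff _ (by simp)).mpr ?_⟩
  have h1 : f 1 ≠ x := fun h => hx ⟨1, h⟩
  have h3 : f 3 ≠ x := fun h => hx ⟨3, h⟩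
  simp [f.injective.eq_iff, h1, h3]

theorem exists_eq_completeBipartiteSubgraph_insert_of_cycle_four
    {H : (completeGraph (Fin 6)).Subgraph} (φ : H.coe ≃g completeBipartiteGraph (Fin 3) (Fin 3))
    (hH : ∀ i, H.Adj (f i) (f (i + 1))) :
    ∃ x ∉ Set.range f, H = completeBipartiteSubgraph (insert x {f 0, f 2}) := by
  obtain ⟨s, hs, rfl⟩ := exists_eq_completeBipartiteSubgraph (by simp) φ
  rw [Nat.card_fin] at hs
  obtain ⟨t, ht0, ht, hst⟩ : ∃ t, f 0 ∈ t ∧ t.ncard = 3 ∧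
      completeBipartiteSubgraph s = completeBipartiteSubgraph t := by
    by_cases h : f 0 ∈ s
    · exact ⟨s, h, hs, rfl⟩
    · refine ⟨sᶜ, h, ?_, (completeBipartiteSubgraph_compl s).symm⟩
      rw [Set.ncard_compl, hs]; simp
  rw [hst] at hH ⊢
  obtain ⟨h1, h2, h3⟩ := (completeBipartiteSubgraph_adj_cycle_four_iff _ ht0).mp hH
  obtain ⟨x, hxP, rfl⟩ :=
    Set.exists_eq_insert_pair_of_ncard_eq_three (f.injective.ne (by decide)) ht0 h2 ht
  refine ⟨x, ?_, rfl⟩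
  rintro ⟨i, rfl⟩
  fin_cases i <;> simp_all

end SimpleGraph

theorem IsCycleEdgeSet.natCard_completeBipartiteSubgraphs {E : Finset (Sym2 (Fin 6))}
    (hE : IsCycleEdgeSet 6 4 E) :
    Nat.card {H : (completeGraph (Fin 6)).Subgraph //
      Nonempty (H.coe ≃g completeBipartiteGraph (Fin 3) (Fin 3)) ∧
      ∀ e ∈ E, e ∈ H.edgeSet} = 2 := by
  obtain ⟨-, f, rfl⟩ := hE
  simp_rw [Subgraph.forall_mem_image_mem_edgeSet_iff]
  let g : ↥(Set.range f)ᶜ → {H : (completeGraph (Fin 6)).Subgraph //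
      Nonempty (H.coe ≃g completeBipartiteGraph (Fin 3) (Fin 3)) ∧
      ∀ i, H.Adj (f i) (f (i + 1))} :=
    fun x => ⟨completeBipartiteSubgraph (insert x.1 {f 0, f 2}),
      completeBipartiteSubgraph_insert_contains_cycle_four f x.2⟩
  have hg : Function.Bijective g := by
    refine ⟨fun x y hxy => Subtype.ext ?_, fun ⟨H, ⟨φ⟩, hH⟩ => ?_⟩
    · refine completeBipartiteSubgraph_insert_injective (Set.mem_insert (f 0) _) ?_
        (congrArg Subtype.val hxy)
      exact fun h => x.2 (Set.pair_subset (Set.mem_range_self 0) (Set.mem_range_self 2) h)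
    · obtain ⟨x, hx, rfl⟩ := exists_eq_completeBipartiteSubgraph_insert_of_cycle_four f φ hH
      exact ⟨⟨x, hx⟩, rfl⟩
  rw [← Nat.card_eq_of_bijective g hg, f.natCard_compl_range]
  simp

/-- Every 4-cycle of `K₆` is a subgraph of exactly two of the `K₃,₃` subgraphs of `K₆`,
and of exactly two of the `K₅` subgraphs of `K₆`. -/
theorem K6_four_cycles_in_two_subgraphs (E : Finset (Sym2 (Fin 6)))
    (hE : IsCycleEdgeSet 6 4 E) :
    Nat.card {H : SimpleGraph.Subgraph (completeGraph (Fin 6)) //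
      Nonempty (H.coe ≃g completeBipartiteGraph (Fin 3) (Fin 3)) ∧
      ∀ e ∈ E, e ∈ H.edgeSet} = 2 ∧
    Nat.card {H : SimpleGraph.Subgraph (completeGraph (Fin 6)) //
      Nonempty (H.coe ≃g completeGraph (Fin 5)) ∧
      ∀ e ∈ E, e ∈ H.edgeSet} = 2 :=
  ⟨hE.natCard_completeBipartiteSubgraphs, hE.natCard_completeSubgraphs⟩
end

section
/- For integers $m_1,\dots,m_5,n_1,\dots,n_5$ (with indices taken modulo 5, so $m_{i+5}=m_i$, $n_{i+5}=n_i$), the following identity holds: $\sum_{i=1}^{5}\big(-2(m_i+m_{i+1}+m_{i+2}-n_i-n_{i+2})-3\big)^2+\sum_{i=1}^{5}\big(2(m_i-n_{i+3}-n_{i+2})+1\big)^2-\sum_{i=1}^{5}\big(-2n_i+2m_i+1\big)^2-\big(2\sum_{i=1}^{5}m_i-2\sum_{i=1}^{5}n_i+5\big)^2 = 4\Big[\sum_{i=1}^{5}\big(-m_i-m_{i+1}+n_{i+3}-1\big)^2+\sum_{i=1}^{5}n_i^2\Big]$. -/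
lemma zmod5_sum (f : ZMod 5 → ℤ) : ∑ i : ZMod 5, f i = f 0 + f 1 + f 2 + f 3 + f 4 := by
  rw [show (Finset.univ : Finset (ZMod 5)) = {0,1,2,3,4} by decide]
  rw [Finset.sum_insert (by decide), Finset.sum_insert (by decide), Finset.sum_insert (by decide), Finset.sum_insert (by decide), Finset.sum_singleton]
  ring

/-- The algebraic identity underlying Lemma 3.1: indices are taken modulo 5. -/
theorem simon_invariant_identity (m n : ZMod 5 → ℤ) :
    (∑ i : ZMod 5, (-2 * (m i + m (i + 1) + m (i + 2) - n i - n (i + 2)) - 3) ^ 2)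
      + (∑ i : ZMod 5, (2 * (m i - n (i + 3) - n (i + 2)) + 1) ^ 2)
      - (∑ i : ZMod 5, (-2 * n i + 2 * m i + 1) ^ 2)
      - (2 * (∑ i : ZMod 5, m i) - 2 * (∑ i : ZMod 5, n i) + 5) ^ 2
    = 4 * ((∑ i : ZMod 5, (-(m i) - m (i + 1) + n (i + 3) - 1) ^ 2)
        + ∑ i : ZMod 5, (n i) ^ 2) := by
  simp only [zmod5_sum,
    show (0:ZMod 5)+1 = 1 from rfl, show (0:ZMod 5)+2 = 2 from rfl, show (0:ZMod 5)+3 = 3 from rfl,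
    show (1:ZMod 5)+1 = 2 from rfl, show (1:ZMod 5)+2 = 3 from rfl, show (1:ZMod 5)+3 = 4 from rfl,
    show (2:ZMod 5)+1 = 3 from rfl, show (2:ZMod 5)+2 = 4 from rfl, show (2:ZMod 5)+3 = 0 from rfl,
    show (3:ZMod 5)+1 = 4 from rfl, show (3:ZMod 5)+2 = 0 from rfl, show (3:ZMod 5)+3 = 1 from rfl,
    show (4:ZMod 5)+1 = 0 from rfl, show (4:ZMod 5)+2 = 1 from rfl, show (4:ZMod 5)+3 = 2 from rfl]
  ring
end
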